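/- Assume the balanced case n₁ = n₂ = n/2. Then Z* ∈ M_opt⁺. Let G be a real symmetric n×n matrix (playing the role of YYᵀ) and let Ẑ ∈ M_opt⁺ satisfy ⟨G, Ẑ⟩ ≥ ⟨G, Z⟩ for all Z ∈ M_opt⁺. Then ⟨Ẑ, I_n⟩ = ⟨Z*, I_n⟩ = n, ⟨Ẑ, E_n⟩ = ⟨Z*, E_n⟩ = 0, and (pγ/4)·‖Ẑ − Z*‖₁ ≤ ⟨R, Z* − Ẑ⟩ ≤ ⟨G − Ḡ, Ẑ − Z*⟩. -/

import Mathlib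

open Matrix Finset

noncomputable section

def opNorm {k l : ℕ} (A : Matrix (Fin k) (Fin l) ℝ) : ℝ :=
  ‖(Matrix.toEuclideanLin A).toContinuousLinearMap‖

def ip {n : ℕ} (A B : Matrix (Fin n) (Fin n) ℝ) : ℝ := Matrix.trace (Aᵀ * B)

def ell1Norm {k l : ℕ} (M : Matrix (Fin k) (Fin l) ℝ) : ℝ := ∑ i, ∑ j, |M i j|

def frobNorm {k l : ℕ} (M : Matrix (Fin k) (Fin l) ℝ) : ℝ :=
  Real.sqrt (∑ i, ∑ j, (M i j) ^ 2)

def euclNorm {k : ℕ} (x : Fin k → ℝ) : ℝ := Real.sqrt (∑ i, x i ^ 2)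

def En (n : ℕ) : Matrix (Fin n) (Fin n) ℝ := Matrix.of fun _ _ => 1

def centering (n : ℕ) : Matrix (Fin n) (Fin n) ℝ := 1 - ((n : ℝ)⁻¹) • En n

def Mopt (n : ℕ) : Set (Matrix (Fin n) (Fin n) ℝ) :=
  {Z | Z.PosSemidef ∧ ∀ i, Z i i = 1}

def MGplus (n : ℕ) : Set (Matrix (Fin n) (Fin n) ℝ) :=
  {Z | Z.PosSemidef ∧ ∀ i, Z i i ≤ 1}

def MoptPlus (n : ℕ) : Set (Matrix (Fin n) (Fin n) ℝ) :=
  {Z | Z.PosSemidef ∧ (∀ i, Z i i = 1) ∧ ip (En n) Z = 0}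

def u2 (n n₁ : ℕ) : Fin n → ℝ := fun j => if (j : ℕ) < n₁ then 1 else -1

def Zstar (n n₁ : ℕ) : Matrix (Fin n) (Fin n) ℝ :=
  Matrix.vecMulVec (u2 n n₁) (u2 n n₁)

def wmin (n n₁ n₂ : ℕ) : ℝ := min ((n₁ : ℝ) / n) ((n₂ : ℝ) / n)

def vref (n n₁ n₂ : ℕ) : Fin n → ℝ :=
  fun j => if (j : ℕ) < n₁ then (n₂ : ℝ) / n else -((n₁ : ℝ) / n)

def Rmat (n n₁ n₂ p : ℕ) (γ : ℝ) : Matrix (Fin n) (Fin n) ℝ :=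
  ((p : ℝ) * γ) • Matrix.vecMulVec (vref n n₁ n₂) (vref n n₁ n₂)

def Dmat (n n₁ : ℕ) (V₁ V₂ : ℝ) : Matrix (Fin n) (Fin n) ℝ :=
  Matrix.diagonal fun j => if (j : ℕ) < n₁ then V₁ else V₂

def Gbar (n n₁ n₂ p : ℕ) (γ V₁ V₂ : ℝ) : Matrix (Fin n) (Fin n) ℝ :=
  centering n * Dmat n n₁ V₁ V₂ * centering n + Rmat n n₁ n₂ p γ

def taubar (n n₁ n₂ p : ℕ) (γ V₁ V₂ : ℝ) : ℝ :=
  Matrix.trace (Gbar n n₁ n₂ p γ V₁ V₂) / n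

def lambar (n n₁ n₂ p : ℕ) (γ V₁ V₂ : ℝ) : ℝ :=
  ((∑ i, ∑ j, Gbar n n₁ n₂ p γ V₁ V₂ i j) - Matrix.trace (Gbar n n₁ n₂ p γ V₁ V₂)) /
    ((n : ℝ) * ((n : ℝ) - 1))

def Bbar (n n₁ n₂ p : ℕ) (γ V₁ V₂ : ℝ) : Matrix (Fin n) (Fin n) ℝ :=
  Gbar n n₁ n₂ p γ V₁ V₂ - lambar n n₁ n₂ p γ V₁ V₂ • (En n - 1) -
    taubar n n₁ n₂ p γ V₁ V₂ • (1 : Matrix (Fin n) (Fin n) ℝ)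

def W0 (n n₁ n₂ : ℕ) (V₁ V₂ : ℝ) : Matrix (Fin n) (Fin n) ℝ :=
  Matrix.diagonal fun j => if (j : ℕ) < n₁ then (V₁ - V₂) * ((n₂ : ℝ) / n)
    else -((V₁ - V₂) * ((n₁ : ℝ) / n))

def blockDiagE (n n₁ : ℕ) : Matrix (Fin n) (Fin n) ℝ :=
  Matrix.of fun i j =>
    if (i : ℕ) < n₁ ∧ (j : ℕ) < n₁ then 1
    else if n₁ ≤ (i : ℕ) ∧ n₁ ≤ (j : ℕ) then -1 else 0

def W2m (n n₁ : ℕ) (V₁ V₂ : ℝ) : Matrix (Fin n) (Fin n) ℝ :=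
  ((V₁ - V₂) / n) • blockDiagE n n₁

def Wbb (n n₁ n₂ : ℕ) (V₁ V₂ : ℝ) : Matrix (Fin n) (Fin n) ℝ :=
  W2m n n₁ V₁ V₂ + ((V₁ - V₂) * ((n₂ : ℝ) / n - (n₁ : ℝ) / n) / n) • En n

/-! In the balanced case `v = u₂ / 2`, so `R = (pγ/4) Z*`. Every `Z ∈ M_opt⁺` has entries in
`[-1, 1]` (2×2 principal minors) while `Z*` has entries `±1`, hence `⟨Z*, Z* - Z⟩ = ‖Z - Z*‖₁`
and the first inequality is an equality. Since `Z ⪰ 0` and `1ᵀ Z 1 = 0`, `Z 1 = 0`, so the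
centering projector fixes `Z` and `⟨(I - P₁) D (I - P₁), Z⟩ = tr D` for diagonal `D`; this term
of `Ḡ` therefore cancels in `⟨G - Ḡ, Ẑ - Z*⟩`, and the second inequality is the optimality of
`Ẑ` tested against `Z*`. -/

theorem ip_eq_sum {n : ℕ} (A B : Matrix (Fin n) (Fin n) ℝ) :
    ip A B = ∑ i, ∑ j, A i j * B i j := by
  simp only [ip, trace, Matrix.diag, mul_apply, transpose_apply]
  exact Finset.sum_comm

theorem ip_comm {n : ℕ} (A B : Matrix (Fin n) (Fin n) ℝ) : ip A B = ip B A := by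
  rw [ip, ip, ← trace_transpose, transpose_mul, transpose_transpose]

theorem ip_sub_left {n : ℕ} (A B C : Matrix (Fin n) (Fin n) ℝ) :
    ip (A - B) C = ip A C - ip B C := by
  simp [ip, Matrix.sub_mul, trace_sub]

theorem ip_add_left {n : ℕ} (A B C : Matrix (Fin n) (Fin n) ℝ) :
    ip (A + B) C = ip A C + ip B C := by
  simp [ip, Matrix.add_mul, trace_add]

theorem ip_sub_right {n : ℕ} (A B C : Matrix (Fin n) (Fin n) ℝ) :
    ip A (B - C) = ip A B - ip A C := by
  simp [ip, Matrix.mul_sub, trace_sub]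

theorem ip_smul_left {n : ℕ} (c : ℝ) (A B : Matrix (Fin n) (Fin n) ℝ) :
    ip (c • A) B = c * ip A B := by
  simp [ip, trace_smul]

theorem ip_one_right {n : ℕ} (A : Matrix (Fin n) (Fin n) ℝ) : ip A 1 = trace A := by
  simp [ip]

theorem ip_diagonal_left {n : ℕ} (d : Fin n → ℝ) (Z : Matrix (Fin n) (Fin n) ℝ) :
    ip (diagonal d) Z = ∑ i, d i * Z i i := by
  simp [ip, trace, Matrix.diag, diagonal_mul]

theorem Matrix.PosSemidef.sq_apply_le_mul_diag {ι : Type*} [Fintype ι]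
    {Z : Matrix ι ι ℝ} (hZ : Z.PosSemidef) (i j : ι) : Z i j ^ 2 ≤ Z i i * Z j j := by
  have hdet := (hZ.submatrix ![i, j]).det_nonneg
  have hsymm : Z j i = Z i j := hZ.isHermitian.apply i j
  rw [det_fin_two] at hdet
  simp only [submatrix_apply, Matrix.cons_val_zero, Matrix.cons_val_one, hsymm] at hdet
  nlinarith

theorem Matrix.PosSemidef.abs_apply_le_one {ι : Type*} [Fintype ι]
    {Z : Matrix ι ι ℝ} (hZ : Z.PosSemidef) (hdiag : ∀ i, Z i i = 1) (i j : ι) :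
    |Z i j| ≤ 1 := by
  have := hZ.sq_apply_le_mul_diag i j
  rw [hdiag, hdiag, one_mul] at this
  exact abs_le_one_iff_mul_self_le_one.mpr (by nlinarith)

theorem ip_mul_mul_left {n : ℕ} (A B C Z : Matrix (Fin n) (Fin n) ℝ) :
    ip (B * A * C) Z = ip A (Bᵀ * Z * Cᵀ) := by
  simp only [ip, transpose_mul, Matrix.mul_assoc]
  rw [trace_mul_comm, Matrix.mul_assoc, Matrix.mul_assoc]

theorem mulVec_one_eq_zero_of_mem_MoptPlus {n : ℕ} {Z : Matrix (Fin n) (Fin n) ℝ}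
    (hZ : Z ∈ MoptPlus n) : Z *ᵥ (fun _ => 1) = 0 := by
  obtain ⟨hpsd, -, hE⟩ := hZ
  refine (hpsd.dotProduct_mulVec_zero_iff _).mp ?_
  rw [ip_eq_sum] at hE
  simpa [dotProduct, mulVec, En, Finset.mul_sum] using hE

theorem centering_mul_mul_centering_of_mem_MoptPlus {n : ℕ} {Z : Matrix (Fin n) (Fin n) ℝ}
    (hZ : Z ∈ MoptPlus n) : centering n * Z * centering n = Z := by
  have hZt : Zᵀ = Z := hZ.1.isHermitian
  have hZE : Z * En n = 0 := by
    ext i j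
    simpa [mul_apply, En, mulVec, dotProduct] using
      congrFun (mulVec_one_eq_zero_of_mem_MoptPlus hZ) i
  have hEZ : En n * Z = 0 := by
    rw [show En n * Z = (Z * En n)ᵀ by rw [transpose_mul, hZt]; rfl, hZE, transpose_zero]
  simp [centering, Matrix.sub_mul, Matrix.mul_sub, hZE, hEZ]

theorem ip_centering_diagonal_centering_of_mem_MoptPlus {n : ℕ} (d : Fin n → ℝ)
    {Z : Matrix (Fin n) (Fin n) ℝ} (hZ : Z ∈ MoptPlus n) :
    ip (centering n * diagonal d * centering n) Z = ∑ i, d i := by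
  have hC : (centering n)ᵀ = centering n := by
    ext i j
    simp [centering, En, one_apply, eq_comm]
  rw [ip_mul_mul_left, hC, centering_mul_mul_centering_of_mem_MoptPlus hZ, ip_diagonal_left]
  simp [hZ.2.1]

theorem ip_one_right_of_diag_eq_one {n : ℕ} {Z : Matrix (Fin n) (Fin n) ℝ}
    (hdiag : ∀ i, Z i i = 1) : ip Z 1 = n := by
  simp [ip_one_right, trace, hdiag]

theorem u2_eq_one_or_neg_one {n n₁ : ℕ} (i : Fin n) : u2 n n₁ i = 1 ∨ u2 n n₁ i = -1 := by
  unfold u2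
  split_ifs <;> simp

theorem sum_u2 {n n₁ n₂ : ℕ} (hn : n = n₁ + n₂) : ∑ i, u2 n n₁ i = n₁ - n₂ := by
  subst hn
  simp only [u2]
  rw [Fin.sum_univ_eq_sum_range (fun i => if i < n₁ then (1 : ℝ) else -1), Finset.sum_range_add]
  simp [Finset.sum_ite_of_true, sub_eq_add_neg]

theorem Zstar_mem_MoptPlus {n n₁ : ℕ} (hn : n = n₁ + n₁) : Zstar n n₁ ∈ MoptPlus n := by
  refine ⟨posSemidef_vecMulVec_self_star (u2 n n₁), fun i => ?_, ?_⟩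
  · rcases u2_eq_one_or_neg_one (n₁ := n₁) i with h | h <;> simp [Zstar, vecMulVec_apply, h]
  · simp [ip_eq_sum, En, Zstar, vecMulVec_apply, ← Finset.sum_mul_sum, sum_u2 hn]

theorem Rmat_eq_smul_Zstar {n n₁ : ℕ} (p : ℕ) (γ : ℝ) (hn : n = n₁ + n₁) :
    Rmat n n₁ n₁ p γ = ((p : ℝ) * γ / 4) • Zstar n n₁ := by
  have hv : ∀ k : Fin n, vref n n₁ n₁ k = u2 n n₁ k / 2 := by
    intro k
    have hn₁ : (n₁ : ℝ) ≠ 0 := by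
      have := k.pos
      exact_mod_cast (by omega : n₁ ≠ 0)
    have hhalf : (n₁ : ℝ) / n = 1 / 2 := by
      rw [hn]; push_cast; field_simp; ring
    unfold vref u2
    split_ifs <;> linarith
  ext i j
  simp only [Rmat, Zstar, Matrix.smul_apply, vecMulVec_apply, smul_eq_mul, hv]
  ring

theorem abs_sub_eq_mul_sub_of_abs_eq_one {s z : ℝ} (hs : |s| = 1) (hz : |z| ≤ 1) :
    |z - s| = s * (s - z) := by
  rw [abs_le] at hz
  rcases abs_eq (zero_le_one' ℝ) |>.mp hs with rfl | rfl
  · rw [abs_of_nonpos (by linarith)]; ring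
  · rw [abs_of_nonneg (by linarith)]; ring

theorem ip_Zstar_sub_eq_ell1Norm {n n₁ : ℕ} {Z : Matrix (Fin n) (Fin n) ℝ}
    (hZ : ∀ i j, |Z i j| ≤ 1) :
    ip (Zstar n n₁) (Zstar n n₁ - Z) = ell1Norm (Z - Zstar n n₁) := by
  have hs : ∀ i j, |Zstar n n₁ i j| = 1 := by
    intro i j
    rcases u2_eq_one_or_neg_one (n₁ := n₁) i with hi | hi <;>
      rcases u2_eq_one_or_neg_one (n₁ := n₁) j with hj | hj <;>
      simp [Zstar, vecMulVec_apply, hi, hj]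
  simp only [ip_eq_sum, ell1Norm, Matrix.sub_apply,
    abs_sub_eq_mul_sub_of_abs_eq_one (hs _ _) (hZ _ _)]

theorem elementary_inequality_balanced_general (n n₁ n₂ p : ℕ) (γ V₁ V₂ : ℝ)
    (hn : n = n₁ + n₂) (hbal : n₁ = n₂)
    (G : Matrix (Fin n) (Fin n) ℝ)
    (Zhat : Matrix (Fin n) (Fin n) ℝ) (hZhatMem : Zhat ∈ MoptPlus n)
    (hZhatMax : ∀ Z ∈ MoptPlus n, ip G Z ≤ ip G Zhat) :
    Zstar n n₁ ∈ MoptPlus n ∧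
    ip Zhat (1 : Matrix (Fin n) (Fin n) ℝ) = (n : ℝ) ∧
    ip (Zstar n n₁) (1 : Matrix (Fin n) (Fin n) ℝ) = (n : ℝ) ∧
    ip Zhat (En n) = 0 ∧
    ip (Zstar n n₁) (En n) = 0 ∧
    ((p : ℝ) * γ / 4) * ell1Norm (Zhat - Zstar n n₁) ≤
      ip (Rmat n n₁ n₂ p γ) (Zstar n n₁ - Zhat) ∧
    ip (Rmat n n₁ n₂ p γ) (Zstar n n₁ - Zhat) ≤
      ip (G - Gbar n n₁ n₂ p γ V₁ V₂) (Zhat - Zstar n n₁) := by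
  subst hbal
  have hZstar := Zstar_mem_MoptPlus hn
  refine ⟨hZstar, ip_one_right_of_diag_eq_one hZhatMem.2.1,
    ip_one_right_of_diag_eq_one hZstar.2.1, ip_comm Zhat _ ▸ hZhatMem.2.2,
    ip_comm (Zstar n n₁) _ ▸ hZstar.2.2, ?_, ?_⟩
  · rw [Rmat_eq_smul_Zstar p γ hn, ip_smul_left,
      ip_Zstar_sub_eq_ell1Norm (hZhatMem.1.abs_apply_le_one hZhatMem.2.1)]
  · have hopt := hZhatMax _ hZstar
    simp only [Gbar, Dmat, ip_sub_left, ip_add_left, ip_sub_right,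
      ip_centering_diagonal_centering_of_mem_MoptPlus _ hZhatMem,
      ip_centering_diagonal_centering_of_mem_MoptPlus _ hZstar] at hopt ⊢
    linarith

/-- elementary inequality for balanced partitions and the BalancedSDP
feasible set `M_opt⁺`. -/
theorem elementary_inequality_balanced (n n₁ n₂ p : ℕ) (γ V₁ V₂ : ℝ)
    (hn : n = n₁ + n₂) (hbal : n₁ = n₂) (hn₁ : 0 < n₁) (hp : 1 ≤ p) (hγ : 0 < γ)
    (G : Matrix (Fin n) (Fin n) ℝ) (hG : Gᵀ = G)
    (Zhat : Matrix (Fin n) (Fin n) ℝ) (hZhatMem : Zhat ∈ MoptPlus n)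
    (hZhatMax : ∀ Z ∈ MoptPlus n, ip G Z ≤ ip G Zhat) :
    Zstar n n₁ ∈ MoptPlus n ∧
    ip Zhat (1 : Matrix (Fin n) (Fin n) ℝ) = (n : ℝ) ∧
    ip (Zstar n n₁) (1 : Matrix (Fin n) (Fin n) ℝ) = (n : ℝ) ∧
    ip Zhat (En n) = 0 ∧
    ip (Zstar n n₁) (En n) = 0 ∧
    ((p : ℝ) * γ / 4) * ell1Norm (Zhat - Zstar n n₁) ≤
      ip (Rmat n n₁ n₂ p γ) (Zstar n n₁ - Zhat) ∧
    ip (Rmat n n₁ n₂ p γ) (Zstar n n₁ - Zhat) ≤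
      ip (G - Gbar n n₁ n₂ p γ V₁ V₂) (Zhat - Zstar n n₁) :=
  elementary_inequality_balanced_general n n₁ n₂ p γ V₁ V₂ hn hbal G Zhat hZhatMem hZhatMax

end
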